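/- For f := τ̂_DiM − τ on Ω, the Stein relation is exactly linear: for every S ∈ Ω, (Lf)(S) = −(n/(n₁ n₀)) · f(S), i.e., L(τ̂_DiM)(S) = −(n/(n₁ n₀)) (τ̂_DiM(S) − τ). Consequently, the difference-in-means estimator is design-unbiased: E_π[τ̂_DiM] = τ. -/

import Mathlib

open Finset

noncomputable section

/-- `Ω`: the collection of `m`-element subsets of `{1,…,n}`, as a `Finset`. -/
def ΩsetJ (n m : ℕ) : Finset (Finset (Fin n)) := Finset.powersetCard m Finset.univ

/-- Expectation with respect to the uniform distribution `π` on `Ω`. -/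
def EpiJ (n m : ℕ) (g : Finset (Fin n) → ℝ) : ℝ :=
  ((ΩsetJ n m).card : ℝ)⁻¹ * ∑ S ∈ ΩsetJ n m, g S

/-- The one-swap (Johnson) kernel: `P(S,S') = 1/(m(n−m))` if `|S ∩ S'| = m−1`, else `0`. -/
def johnsonP (n m : ℕ) (S S' : Finset (Fin n)) : ℝ :=
  if (S ∩ S').card = m - 1 then ((m * (n - m) : ℕ) : ℝ)⁻¹ else 0

/-- Carré du champ `Γ(f)(S) = (1/2) Σ_{S'} P(S,S') (f(S') − f(S))²`. -/
def gammaJ (n m : ℕ) (f : Finset (Fin n) → ℝ) (S : Finset (Fin n)) : ℝ :=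
  (1 / 2) * ∑ S' ∈ ΩsetJ n m, johnsonP n m S S' * (f S' - f S) ^ 2

/-- Variance with respect to the uniform distribution `π` on `Ω`. -/
def VarJ (n m : ℕ) (f : Finset (Fin n) → ℝ) : ℝ :=
  EpiJ n m fun S => (f S - EpiJ n m f) ^ 2

/-- Generator `(Lf)(S) = Σ_{S'} P(S,S') f(S') − f(S)`. -/
def LopJ (n m : ℕ) (f : Finset (Fin n) → ℝ) (S : Finset (Fin n)) : ℝ :=
  (∑ S' ∈ ΩsetJ n m, johnsonP n m S S' * f S') - f S

end

/-- The difference-in-means estimator. -/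
noncomputable def tauDiM {n : ℕ} (n₁ n₀ : ℕ) (y1 y0 : Fin n → ℝ)
    (S : Finset (Fin n)) : ℝ :=
  (n₁ : ℝ)⁻¹ * ∑ i ∈ S, y1 i - (n₀ : ℝ)⁻¹ * ∑ j ∈ Sᶜ, y0 j

/-!
A one-swap move `S ↦ S - a + b` changes a linear statistic `∑_{i ∈ S} w i` by `w b - w a`;
averaging over the `n₁ n₀` swaps shows that the centred statistic
`∑_{i ∈ S} w i - (n₁/n) ∑_i w i` is an eigenfunction of `L` with eigenvalue `-n/(n₁ n₀)`.
With `w i = y1 i / n₁ + y0 i / n₀`, this centred statistic is exactly `τ̂_DiM - τ`.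
Since `P` is symmetric with unit row sums, `π` is stationary, so `E_π[Lf] = 0`; the
eigenrelation with a nonzero eigenvalue then forces `E_π[τ̂_DiM - τ] = 0`.
-/

section Swap

variable {α : Type*} [DecidableEq α]

theorem insert_erase_sdiff_self {S : Finset α} {a b : α} (hb : b ∉ S) :
    insert b (S.erase a) \ S = {b} := by
  ext x; simp only [mem_sdiff, mem_insert, mem_erase, mem_singleton]; grind

theorem sdiff_insert_erase_self {S : Finset α} {a b : α} (ha : a ∈ S) (hb : b ∉ S) :
    S \ insert b (S.erase a) = {a} := by
  ext x; simp only [mem_sdiff, mem_insert, mem_erase, mem_singleton]; grind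

theorem inter_insert_erase_self {S : Finset α} {a b : α} (hb : b ∉ S) :
    S ∩ insert b (S.erase a) = S.erase a := by
  rw [inter_insert_of_notMem hb, inter_eq_right.mpr (erase_subset a S)]

theorem card_insert_erase_of_mem_of_notMem {S : Finset α} {a b : α} (ha : a ∈ S) (hb : b ∉ S) :
    #(insert b (S.erase a)) = #S := by
  rw [card_insert_of_notMem fun h => hb (mem_of_mem_erase h), card_erase_add_one ha]

variable [Fintype α]

theorem injOn_insert_erase (S : Finset α) :
    Set.InjOn (fun p : α × α => insert p.2 (S.erase p.1)) ↑(S ×ˢ Sᶜ) := by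
  rintro ⟨a₁, b₁⟩ hp₁ ⟨a₂, b₂⟩ hp₂ heq
  simp only [coe_product, Set.mem_prod, mem_coe, mem_compl] at hp₁ hp₂ heq
  have hb := congrArg (· \ S) heq
  have ha := congrArg (S \ ·) heq
  simp only [insert_erase_sdiff_self hp₁.2, insert_erase_sdiff_self hp₂.2,
    sdiff_insert_erase_self hp₁.1 hp₁.2, sdiff_insert_erase_self hp₂.1 hp₂.2,
    singleton_inj] at ha hb
  rw [ha, hb]

theorem image_insert_erase_eq_filter {S : Finset α} (hS : S.Nonempty) :
    (S ×ˢ Sᶜ).image (fun p => insert p.2 (S.erase p.1))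
      = (powersetCard #S univ).filter (fun T => #(S ∩ T) = #S - 1) := by
  ext T
  simp only [mem_image, mem_product, mem_compl, Prod.exists, mem_filter, mem_powersetCard,
    subset_univ, true_and]
  constructor
  · rintro ⟨a, b, ⟨ha, hb⟩, rfl⟩
    rw [card_insert_erase_of_mem_of_notMem ha hb, inter_insert_erase_self hb,
      card_erase_of_mem ha]
    exact ⟨rfl, rfl⟩
  · rintro ⟨hT, hST⟩
    have hpos := hS.card_pos
    obtain ⟨a, ha⟩ := card_eq_one.mp (show #(S \ T) = 1 by rw [card_sdiff, inter_comm]; omega)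
    obtain ⟨b, hb⟩ := card_eq_one.mp (show #(T \ S) = 1 by rw [card_sdiff]; omega)
    have haS : a ∈ S := (mem_sdiff.mp (ha ▸ mem_singleton_self a)).1
    have hbS : b ∉ S := (mem_sdiff.mp (hb ▸ mem_singleton_self b)).2
    refine ⟨a, b, ⟨haS, hbS⟩, ?_⟩
    rw [← sdiff_union_inter T S, hb, inter_comm, ← sdiff_sdiff_self_left, ha,
      sdiff_singleton_eq_erase, ← insert_eq]

end Swap

section JohnsonKernel

variable {n m : ℕ}

theorem mem_ΩsetJ {S : Finset (Fin n)} : S ∈ ΩsetJ n m ↔ #S = m := by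
  simp [ΩsetJ]

theorem johnsonP_comm (S T : Finset (Fin n)) : johnsonP n m S T = johnsonP n m T S := by
  simp only [johnsonP, inter_comm]

theorem sum_johnsonP_mul (hm : 0 < m) {S : Finset (Fin n)} (hS : #S = m)
    (g : Finset (Fin n) → ℝ) :
    ∑ T ∈ ΩsetJ n m, johnsonP n m S T * g T
      = ((m * (n - m) : ℕ) : ℝ)⁻¹ * ∑ p ∈ S ×ˢ Sᶜ, g (insert p.2 (S.erase p.1)) := by
  subst hS
  rw [← sum_image (injOn_insert_erase S), image_insert_erase_eq_filter (card_pos.mp hm),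
    sum_filter, mul_sum]
  refine sum_congr rfl fun T _ => ?_
  simp only [johnsonP]
  split_ifs <;> simp

theorem sum_johnsonP (hm : 0 < m) (hmn : m < n) {S : Finset (Fin n)} (hS : S ∈ ΩsetJ n m) :
    ∑ T ∈ ΩsetJ n m, johnsonP n m S T = 1 := by
  have hS' := mem_ΩsetJ.mp hS
  have hdeg : ((m * (n - m) : ℕ) : ℝ) ≠ 0 :=
    Nat.cast_ne_zero.mpr (Nat.mul_ne_zero hm.ne' (Nat.sub_pos_of_lt hmn).ne')
  have := sum_johnsonP_mul hm hS' fun _ => 1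
  simp only [mul_one] at this
  rw [this, sum_const, card_product, card_compl, hS', Fintype.card_fin, nsmul_one,
    inv_mul_cancel₀ hdeg]

theorem sum_LopJ_eq_zero (hm : 0 < m) (hmn : m < n) (f : Finset (Fin n) → ℝ) :
    ∑ S ∈ ΩsetJ n m, LopJ n m f S = 0 := by
  simp only [LopJ, sum_sub_distrib]
  rw [sum_comm, sub_eq_zero]
  refine sum_congr rfl fun T hT => ?_
  simp_rw [johnsonP_comm _ T, ← sum_mul, sum_johnsonP hm hmn hT, one_mul]

theorem LopJ_centered_sum (hm : 0 < m) (hmn : m < n) (w : Fin n → ℝ) {S : Finset (Fin n)}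
    (hS : S ∈ ΩsetJ n m) :
    LopJ n m (fun T => ∑ i ∈ T, w i - m / n * ∑ i, w i) S
      = -((n : ℝ) / ((m : ℝ) * ((n - m : ℕ) : ℝ))) * (∑ i ∈ S, w i - m / n * ∑ i, w i) := by
  have hS' := mem_ΩsetJ.mp hS
  have hswap : ∀ p ∈ S ×ˢ Sᶜ, ∑ i ∈ insert p.2 (S.erase p.1), w i - m / n * ∑ i, w i
      = (∑ i ∈ S, w i - m / n * ∑ i, w i) + w p.2 - w p.1 := by
    intro p hp
    obtain ⟨ha, hb⟩ := mem_product.mp hp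
    rw [sum_insert fun h => mem_compl.mp hb (mem_of_mem_erase h), sum_erase_eq_sub ha]
    ring
  rw [LopJ, sum_johnsonP_mul hm hS', sum_congr rfl hswap, sum_product]
  simp only [sum_add_distrib, sum_sub_distrib, sum_const, card_compl, hS', nsmul_eq_mul,
    Fintype.card_fin, ← mul_sum]
  rw [← sum_add_sum_compl S w]
  have hn : (n : ℝ) ≠ 0 := Nat.cast_ne_zero.mpr (by omega)
  have hnm : (n : ℝ) - m ≠ 0 := sub_ne_zero.mpr (by exact_mod_cast hmn.ne')
  push_cast [Nat.cast_sub hmn.le]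
  field_simp
  ring

theorem EpiJ_eq_of_LopJ_eq_mul (hm : 0 < m) (hmn : m < n) {f : Finset (Fin n) → ℝ} {c r : ℝ}
    (hr : r ≠ 0) (hf : ∀ S ∈ ΩsetJ n m, LopJ n m (fun T => f T - c) S = r * (f S - c)) :
    EpiJ n m f = c := by
  have hsum : ∑ S ∈ ΩsetJ n m, (f S - c) = 0 := by
    have h := sum_LopJ_eq_zero hm hmn fun T => f T - c
    rw [sum_congr rfl hf, ← mul_sum] at h
    exact (mul_eq_zero.mp h).resolve_left hr
  have hcard : (#(ΩsetJ n m) : ℝ) ≠ 0 := by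
    simp [ΩsetJ, card_powersetCard, (Nat.choose_pos hmn.le).ne']
  rw [sum_sub_distrib, sum_const, nsmul_eq_mul, sub_eq_zero] at hsum
  rw [EpiJ, hsum, inv_mul_cancel_left₀ hcard]

end JohnsonKernel

theorem tauDiM_sub_ate_eq_centered_sum {n n₁ n₀ : ℕ} (h : n₁ + n₀ = n) (h₁ : n₁ ≠ 0)
    (h₀ : n₀ ≠ 0) (y1 y0 : Fin n → ℝ) (S : Finset (Fin n)) :
    tauDiM n₁ n₀ y1 y0 S - (n : ℝ)⁻¹ * ∑ i, (y1 i - y0 i)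
      = ∑ i ∈ S, (y1 i / n₁ + y0 i / n₀) - n₁ / n * ∑ i, (y1 i / n₁ + y0 i / n₀) := by
  subst h
  simp only [tauDiM, sum_add_distrib, sum_sub_distrib, ← sum_div]
  rw [← sum_add_sum_compl S y1, ← sum_add_sum_compl S y0]
  have : (n₁ : ℝ) + n₀ ≠ 0 := by positivity
  push_cast
  field_simp
  ring

theorem stmt18_general {n n₁ : ℕ} (h1 : 1 ≤ n₁) (h2 : n₁ ≤ n - 1)
    (y1 y0 : Fin n → ℝ) :
    (∀ S ∈ ΩsetJ n n₁,
      LopJ n n₁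
          (fun S' => tauDiM n₁ (n - n₁) y1 y0 S' - (n : ℝ)⁻¹ * ∑ i, (y1 i - y0 i)) S
        = -((n : ℝ) / ((n₁ : ℝ) * ((n - n₁ : ℕ) : ℝ))) *
            (tauDiM n₁ (n - n₁) y1 y0 S - (n : ℝ)⁻¹ * ∑ i, (y1 i - y0 i))) ∧
    EpiJ n n₁ (tauDiM n₁ (n - n₁) y1 y0) = (n : ℝ)⁻¹ * ∑ i, (y1 i - y0 i) := by
  have hn₁n : n₁ < n := by omega
  have hcentered :=
    tauDiM_sub_ate_eq_centered_sum (Nat.add_sub_cancel' hn₁n.le) (by omega) (by omega) y1 y0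
  have hrate : -((n : ℝ) / ((n₁ : ℝ) * ((n - n₁ : ℕ) : ℝ))) ≠ 0 :=
    neg_ne_zero.mpr <| div_ne_zero (Nat.cast_ne_zero.mpr (by omega)) <|
      mul_ne_zero (Nat.cast_ne_zero.mpr (by omega)) (Nat.cast_ne_zero.mpr (by omega))
  have stein : ∀ S ∈ ΩsetJ n n₁,
      LopJ n n₁
          (fun S' => tauDiM n₁ (n - n₁) y1 y0 S' - (n : ℝ)⁻¹ * ∑ i, (y1 i - y0 i)) S
        = -((n : ℝ) / ((n₁ : ℝ) * ((n - n₁ : ℕ) : ℝ))) *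
            (tauDiM n₁ (n - n₁) y1 y0 S - (n : ℝ)⁻¹ * ∑ i, (y1 i - y0 i)) := by
    intro S hS
    simp only [hcentered]
    exact LopJ_centered_sum h1 hn₁n _ hS
  exact ⟨stein, EpiJ_eq_of_LopJ_eq_mul h1 hn₁n hrate stein⟩

/-- the exactly linear Stein relation for difference-in-means:
`(Lf)(S) = −(n/(n₁n₀)) f(S)` for `f = τ̂_DiM − τ` on `Ω`, and design-unbiasedness
`E_π[τ̂_DiM] = τ`. -/
theorem stmt18 {n n₁ : ℕ} (hn : 2 ≤ n) (h1 : 1 ≤ n₁) (h2 : n₁ ≤ n - 1)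
    (y1 y0 : Fin n → ℝ) :
    (∀ S ∈ ΩsetJ n n₁,
      LopJ n n₁
          (fun S' => tauDiM n₁ (n - n₁) y1 y0 S' - (n : ℝ)⁻¹ * ∑ i, (y1 i - y0 i)) S
        = -((n : ℝ) / ((n₁ : ℝ) * ((n - n₁ : ℕ) : ℝ))) *
            (tauDiM n₁ (n - n₁) y1 y0 S - (n : ℝ)⁻¹ * ∑ i, (y1 i - y0 i))) ∧
    EpiJ n n₁ (tauDiM n₁ (n - n₁) y1 y0) = (n : ℝ)⁻¹ * ∑ i, (y1 i - y0 i) :=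
  stmt18_general h1 h2 y1 y0
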